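/- Let [Γ] be a projective class of torsion-free affine connections on an oriented n-manifold M that contains the Levi-Civita connection of a pseudo-Riemannian metric g. Then the weighted tensor K_{ij} := g_{ij} ⊗ (Vol_g)^{−4/(n+1)}, a symmetric (0,2)-tensor of projective weight −4, satisfies the projective Killing equation K_{ij,k} + K_{jk,i} + K_{ki,j} = 0 (with covariant derivative taken with respect to any connection in [Γ]). -/

import Mathlib

open scoped ContDiff

noncomputable section

namespace ProjGeo

/-- The partial derivative of a function on `ℝⁿ` in the `j`-th coordinate direction. -/
def pd {n : ℕ} (j : Fin n) (f : (Fin n → ℝ) → ℝ) (p : Fin n → ℝ) : ℝ :=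
  fderiv ℝ f p (Pi.single j 1)

/-- Christoffel symbols in coordinates: `Γ p i j k` represents `Γ^i_{jk}` at the point `p`. -/
abbrev Christoffel (n : ℕ) := (Fin n → ℝ) → Fin n → Fin n → Fin n → ℝ

/-- A connection is torsion-free (symmetric) if `Γ^i_{jk} = Γ^i_{kj}`. -/
def TorsionFree {n : ℕ} (Γ : Christoffel n) : Prop :=
  ∀ p i j k, Γ p i j k = Γ p i k j

/-- Smoothness of the Christoffel symbols on the open set `U`. -/
def SmoothChristoffelOn {n : ℕ} (U : Set (Fin n → ℝ)) (Γ : Christoffel n) : Prop :=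
  ∀ i j k, ContDiffOn ℝ ∞ (fun p => Γ p i j k) U

/-- `γ` is a (parameterized) geodesic of the connection `Γ` on the parameter set `I`,
staying inside `U`: it is smooth and satisfies `γ̈^i + Γ^i_{jk} γ̇^j γ̇^k = 0`. -/
def IsGeodesicOn {n : ℕ} (U : Set (Fin n → ℝ)) (Γ : Christoffel n)
    (γ : ℝ → Fin n → ℝ) (I : Set ℝ) : Prop :=
  (∀ t ∈ I, γ t ∈ U) ∧ (∀ i, ContDiffOn ℝ ∞ (fun t => γ t i) I) ∧
  ∀ t ∈ I, ∀ i,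
    deriv (fun s => deriv (fun u => γ u i) s) t
      + ∑ j, ∑ k, Γ (γ t) i j k * deriv (fun u => γ u j) t * deriv (fun u => γ u k) t = 0

/-- `h` is a smooth regular reparameterisation defined on `J` and mapping `J` bijectively
onto `I`. -/
def IsReparam (I J : Set ℝ) (h : ℝ → ℝ) : Prop :=
  ContDiffOn ℝ ∞ h J ∧ (∀ t ∈ J, deriv h t ≠ 0) ∧ Set.BijOn h J I

/-- Two connections are projectively equivalent on `U`: each geodesic of the one is, after a
suitable reparameterisation, a geodesic of the other, and vice versa. -/
def ProjEquivOn {n : ℕ} (U : Set (Fin n → ℝ)) (Γ Γ' : Christoffel n) : Prop :=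
  (∀ γ I, IsOpen I → IsGeodesicOn U Γ γ I →
    ∃ h J, IsOpen J ∧ IsReparam I J h ∧ IsGeodesicOn U Γ' (fun t => γ (h t)) J) ∧
  (∀ γ I, IsOpen I → IsGeodesicOn U Γ' γ I →
    ∃ h J, IsOpen J ∧ IsReparam I J h ∧ IsGeodesicOn U Γ (fun t => γ (h t)) J)

/-- `Γ'` is obtained from `Γ` by the projective change associated with the 1-form `φ`:
`Γ'^i_{jk} = Γ^i_{jk} + φ_k δ^i_j + φ_j δ^i_k` on `U`. -/
def ProjChange {n : ℕ} (Γ Γ' : Christoffel n) (φ : (Fin n → ℝ) → Fin n → ℝ)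
    (U : Set (Fin n → ℝ)) : Prop :=
  ∀ p ∈ U, ∀ i j k, Γ' p i j k =
    Γ p i j k + (if i = j then φ p k else 0) + (if i = k then φ p j else 0)

end ProjGeo

namespace ProjGeo

/-- The covariant derivative `K_{ij,k}` of a `(0,2)`-tensor `K` of projective weight `w`
(in the local trivialization of `(Λₙ)^{w/(n+1)}` by `(dx¹∧⋯∧dxⁿ)^{w/(n+1)}`):
`K_{ij,k} = ∂_k K_{ij} − Γ^s_{ik} K_{sj} − Γ^s_{jk} K_{is} − (w/(n+1)) Γ^s_{sk} K_{ij}`. -/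
def covForm2 {n : ℕ} (w : ℝ) (Γ : Christoffel n) (K : (Fin n → ℝ) → Fin n → Fin n → ℝ)
    (p : Fin n → ℝ) (i j k : Fin n) : ℝ :=
  pd k (fun q => K q i j) p - ∑ s, Γ p s i k * K p s j - ∑ s, Γ p s j k * K p i s
    - (w / ((n : ℝ) + 1)) * (∑ s, Γ p s s k) * K p i j

end ProjGeo

namespace ProjGeo

/-- A (pseudo-Riemannian) metric on `U` in coordinates: a smooth symmetric nondegenerate
matrix-valued function. -/
def MetricOn {n : ℕ} (U : Set (Fin n → ℝ))
    (g : (Fin n → ℝ) → Matrix (Fin n) (Fin n) ℝ) : Prop :=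
  (∀ i j, ContDiffOn ℝ ∞ (fun p => g p i j) U) ∧
  (∀ p ∈ U, ∀ i j, g p i j = g p j i) ∧
  (∀ p ∈ U, (g p).det ≠ 0)

/-- A Riemannian (positive definite) metric on `U` in coordinates. -/
def RiemannianOn {n : ℕ} (U : Set (Fin n → ℝ))
    (g : (Fin n → ℝ) → Matrix (Fin n) (Fin n) ℝ) : Prop :=
  MetricOn U g ∧
  ∀ p ∈ U, ∀ v : Fin n → ℝ, v ≠ 0 → 0 < ∑ i, ∑ j, g p i j * v i * v j

/-- The Christoffel symbols of the Levi-Civita connection of the metric `g`: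
`Γ^i_{jk} = ½ g^{is} (∂_j g_{sk} + ∂_k g_{sj} − ∂_s g_{jk})`. -/
def LeviCivita {n : ℕ} (g : (Fin n → ℝ) → Matrix (Fin n) (Fin n) ℝ) : Christoffel n :=
  fun p i j k => (1 / 2) * ∑ s, (g p)⁻¹ i s *
    (pd j (fun q => g q s k) p + pd k (fun q => g q s j) p - pd s (fun q => g q j k) p)

end ProjGeo

/-!
The Levi-Civita connection preserves both `g` and `Vol_g = |det g|^{1/2} dx¹ ∧ ⋯ ∧ dxⁿ`, so
the weighted metric `g ⊗ Vol_g^{w/(n+1)}` is parallel for it, whatever the weight `w`.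
Under a projective change `Γ' = Γ + φ ⊗ δ + δ ⊗ φ` the covariant derivative `K_{ij,k}` of a
`(0,2)`-tensor of weight `w` changes by `-((2 + w) φ_k K_{ij} + φ_i K_{kj} + φ_j K_{ik})`; for
`w = -4` and symmetric `K` the cyclic sum of this correction vanishes.
-/

namespace Matrix

variable {R ι : Type*} [CommRing R] [Fintype ι] [DecidableEq ι]

theorem det_updateCol_eq_sum_perm (A : Matrix ι ι R) (i : ι) (b : ι → R) :
    (A.updateCol i b).det = ∑ σ : Equiv.Perm ι,
      (Equiv.Perm.sign σ : R) * (b (σ i) * ∏ j ∈ Finset.univ.erase i, A (σ j) j) := by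
  rw [det_apply']
  refine Finset.sum_congr rfl fun σ _ => ?_
  rw [← Finset.mul_prod_erase Finset.univ _ (Finset.mem_univ i), updateCol_self]
  congr 2
  exact Finset.prod_congr rfl fun j hj => updateCol_ne (Finset.ne_of_mem_erase hj)

end Matrix

section Jacobi

variable {𝕜 E ι : Type*} [NontriviallyNormedField 𝕜] [NormedAddCommGroup E] [NormedSpace 𝕜 E]
  [Fintype ι] [DecidableEq ι]

theorem HasFDerivAt.matrix_det {M : E → Matrix ι ι 𝕜} {L : ι → ι → E →L[𝕜] 𝕜} {p : E}
    (h : ∀ a b, HasFDerivAt (fun q => M q a b) (L a b) p) :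
    HasFDerivAt (fun q => (M q).det) (∑ a, ∑ b, (M p).adjugate a b • L b a) p := by
  simp_rw [Matrix.det_apply']
  have hsum := HasFDerivAt.fun_sum (u := Finset.univ) fun σ (_ : σ ∈ Finset.univ) =>
    (HasFDerivAt.finsetProd fun i (_ : i ∈ Finset.univ) => h (σ i) i).const_mul
      ((Equiv.Perm.sign σ : ℤ) : 𝕜)
  refine hsum.congr_fderiv (ContinuousLinearMap.ext fun v => ?_)
  simp only [sum_apply, smul_apply, smul_eq_mul]
  calc ∑ σ : Equiv.Perm ι, ((Equiv.Perm.sign σ : ℤ) : 𝕜)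
          * ∑ i, (∏ j ∈ Finset.univ.erase i, M p (σ j) j) * L (σ i) i v
      = ∑ i, ((M p).updateCol i fun s => L s i v).det := by
        simp_rw [Matrix.det_updateCol_eq_sum_perm, Finset.mul_sum]
        rw [Finset.sum_comm]
        exact Finset.sum_congr rfl fun i _ => Finset.sum_congr rfl fun σ _ => by ring
    _ = ∑ a, ∑ b, (M p).adjugate a b * L b a v := by
        refine Finset.sum_congr rfl fun a _ => ?_
        rw [← Matrix.cramer_apply, Matrix.cramer_eq_adjugate_mulVec]
        rfl

end Jacobi

theorem hasDerivAt_abs_rpow_of_ne_zero (c : ℝ) {x : ℝ} (hx : x ≠ 0) :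
    HasDerivAt (fun y => |y| ^ c) (c * |x| ^ c / x) x := by
  refine ((Real.hasDerivAt_rpow_const (Or.inl (abs_ne_zero.mpr hx))).comp x
    (hasDerivAt_abs hx)).congr_deriv ?_
  rw [Real.rpow_sub (abs_pos.mpr hx), Real.rpow_one]
  rcases hx.lt_or_gt with hneg | hpos
  · simp only [abs_of_neg hneg, sign_neg hneg, SignType.coe_neg, SignType.coe_one]
    field_simp
  · simp only [abs_of_pos hpos, sign_pos hpos, SignType.coe_one]
    field_simp

namespace ProjGeo

variable {n : ℕ}

def pdMat (d : Fin n) (M : (Fin n → ℝ) → Matrix (Fin n) (Fin n) ℝ) (p : Fin n → ℝ) :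
    Matrix (Fin n) (Fin n) ℝ :=
  Matrix.of fun a b => pd d (fun q => M q a b) p

theorem pd_mul {f h : (Fin n → ℝ) → ℝ} {p : Fin n → ℝ} (d : Fin n)
    (hf : DifferentiableAt ℝ f p) (hh : DifferentiableAt ℝ h p) :
    pd d (fun q => f q * h q) p = pd d f p * h p + f p * pd d h p := by
  simp only [pd, fderiv_fun_mul hf hh, _root_.add_apply, _root_.smul_apply, smul_eq_mul]
  ring

theorem differentiableAt_abs_det_rpow {M : (Fin n → ℝ) → Matrix (Fin n) (Fin n) ℝ}
    {p : Fin n → ℝ} (hM : ∀ a b, DifferentiableAt ℝ (fun q => M q a b) p)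
    (hdet : (M p).det ≠ 0) (c : ℝ) : DifferentiableAt ℝ (fun q => |(M q).det| ^ c) p := by
  have hderiv := (hasDerivAt_abs_rpow_of_ne_zero c hdet).comp_hasFDerivAt p
    (HasFDerivAt.matrix_det fun a b => (hM a b).hasFDerivAt)
  exact hderiv.differentiableAt

theorem pd_abs_det_rpow {M : (Fin n → ℝ) → Matrix (Fin n) (Fin n) ℝ} {p : Fin n → ℝ}
    (hM : ∀ a b, DifferentiableAt ℝ (fun q => M q a b) p) (hdet : (M p).det ≠ 0)
    (c : ℝ) (d : Fin n) :
    pd d (fun q => |(M q).det| ^ c) p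
      = c * |(M p).det| ^ c * ((M p)⁻¹ * pdMat d M p).trace := by
  have hderiv := (hasDerivAt_abs_rpow_of_ne_zero c hdet).comp_hasFDerivAt p
    (HasFDerivAt.matrix_det fun a b => (hM a b).hasFDerivAt)
  have hadj : (M p).adjugate = (M p).det • (M p)⁻¹ := by
    rw [Matrix.inv_def, smul_smul, Ring.inverse_eq_inv', mul_inv_cancel₀ hdet, one_smul]
  rw [pd, show (fun q => |(M q).det| ^ c) = (fun y => |y| ^ c) ∘ fun q => (M q).det from rfl,
    hderiv.fderiv]
  simp only [_root_.smul_apply, _root_.sum_apply, hadj, Matrix.trace, Matrix.diag,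
    Matrix.mul_apply, pdMat, Matrix.of_apply, Matrix.smul_apply, smul_eq_mul, Finset.mul_sum]
  field_simp
  rfl

theorem covForm2_of_projChange {Γ Γ' : Christoffel n} {φ : (Fin n → ℝ) → Fin n → ℝ}
    {U : Set (Fin n → ℝ)} (hΓ : ProjChange Γ Γ' φ U) {p : Fin n → ℝ} (hp : p ∈ U) (w : ℝ)
    (K : (Fin n → ℝ) → Fin n → Fin n → ℝ) (a b d : Fin n) :
    covForm2 w Γ' K p a b d = covForm2 w Γ K p a b d
      - ((2 + w) * φ p d * K p a b + φ p a * K p d b + φ p b * K p a d) := by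
  have hleft : ∑ s, Γ' p s a d * K p s b
      = ∑ s, Γ p s a d * K p s b + φ p d * K p a b + φ p a * K p d b := by
    simp only [hΓ p hp, add_mul, ite_mul, zero_mul, Finset.sum_add_distrib, Finset.sum_ite_eq',
      Finset.mem_univ, if_true]
  have hright : ∑ s, Γ' p s b d * K p a s
      = ∑ s, Γ p s b d * K p a s + φ p d * K p a b + φ p b * K p a d := by
    simp only [hΓ p hp, add_mul, ite_mul, zero_mul, Finset.sum_add_distrib, Finset.sum_ite_eq',
      Finset.mem_univ, if_true]
  have htrace : ∑ s, Γ' p s s d = ∑ s, Γ p s s d + ((n : ℝ) + 1) * φ p d := by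
    simp only [hΓ p hp, if_true, Finset.sum_add_distrib, Finset.sum_ite_eq', Finset.mem_univ,
      Finset.sum_const, Finset.card_univ, Fintype.card_fin, nsmul_eq_mul]
    ring
  rw [covForm2, covForm2, hleft, hright, htrace]
  field_simp
  ring

section LeviCivita

variable {g : (Fin n → ℝ) → Matrix (Fin n) (Fin n) ℝ} {p : Fin n → ℝ}

theorem sum_leviCivita_mul (hsymm : (g p).IsSymm) (hdet : (g p).det ≠ 0) (a b d : Fin n) :
    ∑ s, LeviCivita g p s a d * g p s b = (1 / 2) *
      (pd a (fun q => g q b d) p + pd d (fun q => g q b a) p - pd b (fun q => g q a d) p) := by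
  set w : Fin n → ℝ := fun t =>
    pd a (fun q => g q t d) p + pd d (fun q => g q t a) p - pd t (fun q => g q a d) p
  have hcontract :
      ∑ s, LeviCivita g p s a d * g p s b = (1 / 2) * (g p * (g p)⁻¹).mulVec w b := by
    simp only [LeviCivita, Matrix.mulVec, dotProduct, Matrix.mul_apply, Finset.mul_sum,
      Finset.sum_mul, hsymm.apply b]
    rw [Finset.sum_comm]
    exact Finset.sum_congr rfl fun _ _ => Finset.sum_congr rfl fun _ _ => by ring
  rw [hcontract, Matrix.mul_nonsing_inv _ (isUnit_iff_ne_zero.mpr hdet), Matrix.one_mulVec]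

theorem sum_leviCivita_mul_add_sum_leviCivita_mul (hsymm : (g p).IsSymm)
    (hdet : (g p).det ≠ 0) {a b d : Fin n}
    (hd : pd d (fun q => g q b a) p = pd d (fun q => g q a b) p) :
    ∑ s, LeviCivita g p s a d * g p s b + ∑ s, LeviCivita g p s b d * g p a s
      = pd d (fun q => g q a b) p := by
  simp only [hsymm.apply _ a, sum_leviCivita_mul hsymm hdet, hd]
  ring

theorem sum_leviCivita_self (hsymm : (g p).IsSymm) (d : Fin n) :
    ∑ s, LeviCivita g p s s d = (1 / 2) * ((g p)⁻¹ * pdMat d g p).trace := by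
  have hinv := hsymm.inv
  have hcancel : ∑ s, ∑ t, (g p)⁻¹ s t * pd t (fun q => g q s d) p
      = ∑ s, ∑ t, (g p)⁻¹ s t * pd s (fun q => g q t d) p := by
    rw [Finset.sum_comm]
    simp only [hinv.apply]
  simp only [LeviCivita, Matrix.trace, Matrix.diag, Matrix.mul_apply, pdMat, Matrix.of_apply,
    mul_add, mul_sub, Finset.sum_add_distrib, Finset.sum_sub_distrib, ← Finset.mul_sum, hcancel]
  ring

end LeviCivita

section Metric

variable {U : Set (Fin n → ℝ)} {g : (Fin n → ℝ) → Matrix (Fin n) (Fin n) ℝ} {p : Fin n → ℝ}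

theorem MetricOn.isSymm (hg : MetricOn U g) (hp : p ∈ U) : (g p).IsSymm :=
  Matrix.IsSymm.ext fun i j => hg.2.1 p hp j i

theorem MetricOn.differentiableAt (hg : MetricOn U g) (hU : IsOpen U) (hp : p ∈ U)
    (a b : Fin n) : DifferentiableAt ℝ (fun q => g q a b) p :=
  ((hg.1 a b).contDiffAt (hU.mem_nhds hp)).differentiableAt (by simp)

theorem MetricOn.pd_symm (hg : MetricOn U g) (hU : IsOpen U) (hp : p ∈ U) (d a b : Fin n) :
    pd d (fun q => g q b a) p = pd d (fun q => g q a b) p := by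
  have hev : (fun q => g q b a) =ᶠ[nhds p] fun q => g q a b :=
    Filter.eventuallyEq_of_mem (hU.mem_nhds hp) fun q hq => hg.2.1 q hq b a
  simp only [pd, hev.fderiv_eq]

theorem covForm2_leviCivita_eq_zero (hg : MetricOn U g) (hU : IsOpen U) (w : ℝ)
    {K : (Fin n → ℝ) → Fin n → Fin n → ℝ}
    (hK : ∀ q a b, K q a b = g q a b * |(g q).det| ^ (w / (2 * ((n : ℝ) + 1))))
    (hp : p ∈ U) (a b d : Fin n) :
    covForm2 w (LeviCivita g) K p a b d = 0 := by
  set c := w / (2 * ((n : ℝ) + 1))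
  set F := |(g p).det| ^ c
  set T := ((g p)⁻¹ * pdMat d g p).trace
  have hsymm := hg.isSymm hp
  have hdet := hg.2.2 p hp
  have hdiff := hg.differentiableAt hU hp
  have hpdK : pd d (fun q => K q a b) p
      = pd d (fun q => g q a b) p * F + g p a b * (c * F * T) := by
    simp only [hK]
    rw [pd_mul d (hdiff a b) (differentiableAt_abs_det_rpow hdiff hdet c),
      pd_abs_det_rpow hdiff hdet]
  have hcompat : ∑ s, LeviCivita g p s a d * K p s b + ∑ s, LeviCivita g p s b d * K p a s
      = pd d (fun q => g q a b) p * F := by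
    simp only [hK, ← mul_assoc, ← Finset.sum_mul, ← add_mul]
    rw [sum_leviCivita_mul_add_sum_leviCivita_mul hsymm hdet (hg.pd_symm hU hp d a b)]
  rw [covForm2, hpdK, sum_leviCivita_self hsymm, hK p a b]
  have hc : c = w / ((n : ℝ) + 1) / 2 := by rw [div_div, mul_comm]
  linear_combination -hcompat + g p a b * F * T * hc

end Metric

theorem statement_10_general {n : ℕ} (U : Set (Fin n → ℝ)) (hU : IsOpen U)
    (g : (Fin n → ℝ) → Matrix (Fin n) (Fin n) ℝ) (hg : MetricOn U g)
    (Γ' : Christoffel n)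
    (φ : (Fin n → ℝ) → Fin n → ℝ) (hmem : ProjChange (LeviCivita g) Γ' φ U)
    (K : (Fin n → ℝ) → Fin n → Fin n → ℝ)
    (hK : ∀ p i j, K p i j = g p i j * |(g p).det| ^ (-2 / ((n : ℝ) + 1))) :
    ∀ p ∈ U, ∀ i j k,
      covForm2 (-4) Γ' K p i j k + covForm2 (-4) Γ' K p j k i
        + covForm2 (-4) Γ' K p k i j = 0 := by
  intro p hp i j k
  have hweight : (-4 : ℝ) / (2 * ((n : ℝ) + 1)) = -2 / ((n : ℝ) + 1) := by
    rw [← div_div]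
    norm_num
  have hparallel := covForm2_leviCivita_eq_zero hg hU (-4) (hweight ▸ hK) hp
  have hKsymm : ∀ a b, K p a b = K p b a := fun a b => by rw [hK, hK, (hg.isSymm hp).apply]
  simp only [covForm2_of_projChange hmem hp, hparallel, hKsymm k j, hKsymm k i, hKsymm j i]
  ring

/-- If the projective class `[Γ]` contains the Levi-Civita connection of a
pseudo-Riemannian metric `g`, then the weighted `(0,2)`-tensor
`K_{ij} := g_{ij} ⊗ (Vol_g)^{−4/(n+1)}` of projective weight `−4` (whose coefficient in the
local trivialization is `g_{ij} |det g|^{−2/(n+1)}`) satisfies the projective Killing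
equation `K_{ij,k} + K_{jk,i} + K_{ki,j} = 0`, the covariant derivative being taken with
respect to any connection `Γ'` in the projective class `[Γ]`. -/
theorem statement_10 {n : ℕ} (hn : 2 ≤ n) (U : Set (Fin n → ℝ)) (hU : IsOpen U)
    (g : (Fin n → ℝ) → Matrix (Fin n) (Fin n) ℝ) (hg : MetricOn U g)
    (Γ' : Christoffel n) (hTF' : TorsionFree Γ')
    (φ : (Fin n → ℝ) → Fin n → ℝ) (hmem : ProjChange (LeviCivita g) Γ' φ U)
    (K : (Fin n → ℝ) → Fin n → Fin n → ℝ)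
    (hK : ∀ p i j, K p i j = g p i j * |(g p).det| ^ (-2 / ((n : ℝ) + 1))) :
    ∀ p ∈ U, ∀ i j k,
      covForm2 (-4) Γ' K p i j k + covForm2 (-4) Γ' K p j k i
        + covForm2 (-4) Γ' K p k i j = 0 :=
  statement_10_general U hU g hg Γ' φ hmem K hK

end ProjGeo
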